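/- arXiv:2509.06032 — 3 statements merged into one kernel-verified Lean document; each statement's English description precedes it below -/
import Mathlib

section
/- Let m ≥ 0 be an integer, k ≥ 1 an odd integer, n ≥ 1 an odd integer, and r ≥ 0 an integer. Then h_{m,k}(2^{r+1} n) − h_{m,k}(2^r n) = #{ℓ ∣ n : 2^{-1-r} u_{m,k}(2^{r+1} n) < 2kℓ ≤ 2^{-r} u_{m,k}(2^r n)} + #{ℓ ∣ n : 2 u_{m,k}(2^r n) < 2kℓ ≤ 2 u_{m,k}(2^{r+1} n)}. -/
/-
Every divisor of `2 ^ s * n` with `n` odd is uniquely `2 ^ j * ℓ` with `j ≤ s` and `ℓ ∣ n`, and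
for fixed `ℓ` the dyadic window `(U, 2U]` contains at most one of the numbers `2 ^ j * (2kℓ)`. Hence
`hd m k (2 ^ s * n)` counts the `ℓ ∣ n` with `2kℓ ∈ (U / 2 ^ s, 2U]`, where
`U = u m k (2 ^ s * n)`. Since `0 ≤ u N ≤ u (2N) ≤ 2 u N`, the interval for `s = r + 1` is the
disjoint union of `(u' / 2 ^ (r + 1), u / 2 ^ r]`, the interval for `s = r`, and `(2u, 2u']`.
-/

open scoped Classical

/-- `u m k n = √(2kn + (m - k/2)²) − (m − k/2)`. -/
noncomputable def u (m k n : ℕ) : ℝ :=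
  Real.sqrt (2*k*n + ((m : ℝ) - k/2)^2) - ((m : ℝ) - k/2)

/-- `hd m k n` is the number of divisors `d` of `n` with `u m k n < 2kd ≤ 2·u m k n`. -/
noncomputable def hd (m k n : ℕ) : ℕ :=
  (n.divisors.filter (fun d => u m k n < ((2*k*d : ℕ) : ℝ) ∧ ((2*k*d : ℕ) : ℝ) ≤ 2 * u m k n)).card

open Finset

theorem Nat.card_filter_divisors_two_pow_mul {n : ℕ} (hn : Odd n) (s : ℕ) (P : ℕ → Prop)
    [DecidablePred P] :
    #{d ∈ (2 ^ s * n).divisors | P d} =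
      ∑ ℓ ∈ n.divisors, #{j ∈ range (s + 1) | P (2 ^ j * ℓ)} := by
  have hcop : (2 ^ s).Coprime n := (Nat.coprime_two_left.mpr hn).pow_left s
  rw [card_filter, Nat.divisors_mul, Finset.mul_def, sum_image hcop.mul_injOn_divisors,
    sum_product_right, Nat.divisors_prime_pow Nat.prime_two]
  simp only [sum_map, card_filter]
  rfl

section Dyadic

variable {U x : ℝ}

theorem exists_two_pow_mul_mem_Ioc (hx : x ≤ 2 * U) {s : ℕ} (hs : U < 2 ^ s * x) :
    ∃ j ≤ s, U < 2 ^ j * x ∧ 2 ^ j * x ≤ 2 * U := by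
  induction s with
  | zero => exact ⟨0, le_rfl, by simpa using hs, by simpa using hx⟩
  | succ s ih =>
    by_cases hle : 2 ^ (s + 1) * x ≤ 2 * U
    · exact ⟨s + 1, le_rfl, hs, hle⟩
    · obtain ⟨j, hj, hUj⟩ := ih (by rw [pow_succ] at hle; linarith)
      exact ⟨j, hj.trans s.le_succ, hUj⟩

theorem eq_of_two_pow_mul_mem_Ioc (hU : 0 ≤ U) {i j : ℕ}
    (hi : U < 2 ^ i * x ∧ 2 ^ i * x ≤ 2 * U) (hj : U < 2 ^ j * x ∧ 2 ^ j * x ≤ 2 * U) :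
    i = j := by
  have hx : 0 < x := pos_of_mul_pos_right (hU.trans_lt hi.1) (by positivity)
  wlog hij : i < j generalizing i j
  · exact (lt_or_eq_of_le (not_lt.mp hij)).elim (fun h => (this hj hi h).symm) Eq.symm
  have : (2 : ℝ) ^ (i + 1) ≤ 2 ^ j := pow_le_pow_right₀ one_le_two hij
  rw [pow_succ] at this
  nlinarith [hi.1, hj.2]

theorem card_filter_two_pow_mul_mem_Ioc (hU : 0 ≤ U) (s : ℕ) :
    #{j ∈ range (s + 1) | U < 2 ^ j * x ∧ 2 ^ j * x ≤ 2 * U} =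
      if U / 2 ^ s < x ∧ x ≤ 2 * U then 1 else 0 := by
  have hs : U / 2 ^ s < x ↔ U < 2 ^ s * x := by rw [div_lt_iff₀' (by positivity)]
  split_ifs with h
  · obtain ⟨j, hjs, hj⟩ := exists_two_pow_mul_mem_Ioc h.2 (hs.mp h.1)
    refine le_antisymm (card_le_one.mpr fun i hi j hj => ?_) (card_pos.mpr ⟨j, ?_⟩)
    · exact eq_of_two_pow_mul_mem_Ioc hU (mem_filter.mp hi).2 (mem_filter.mp hj).2
    · exact mem_filter.mpr ⟨mem_range_succ_iff.mpr hjs, hj⟩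
  · refine card_eq_zero.mpr <|
      filter_eq_empty_iff.mpr fun j hj ⟨hUj, hjU⟩ => h ⟨hs.mpr ?_, ?_⟩
    all_goals
      have hx : 0 < x := pos_of_mul_pos_right (hU.trans_lt hUj) (by positivity)
      have h1 : (1 : ℝ) ≤ 2 ^ j := one_le_pow₀ one_le_two
      have h2 : (2 : ℝ) ^ j ≤ 2 ^ s := pow_le_pow_right₀ one_le_two (mem_range_succ_iff.mp hj)
    · nlinarith
    · nlinarith

end Dyadic

theorem card_filter_mem_Ioc_add {α β : Type*} [LinearOrder β] (t : Finset α) (g : α → β)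
    {a b c : β} (hab : a ≤ b) (hbc : b ≤ c) :
    #{x ∈ t | a < g x ∧ g x ≤ b} + #{x ∈ t | b < g x ∧ g x ≤ c} =
      #{x ∈ t | a < g x ∧ g x ≤ c} := by
  rw [← card_union_of_disjoint (disjoint_filter.mpr fun _ _ h1 h2 => h2.1.not_ge h1.2),
    ← filter_or]
  exact congrArg card (filter_congr fun x _ => by
    constructor
    · rintro (h | h) <;> exact ⟨by order, by order⟩
    · intro h; by_cases hb : g x ≤ b
      exacts [Or.inl ⟨h.1, hb⟩, Or.inr ⟨not_le.mp hb, h.2⟩])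

theorem u_nonneg (m k N : ℕ) : 0 ≤ u m k N := by
  rw [u, sub_nonneg]
  calc ((m : ℝ) - k / 2) ≤ |(m : ℝ) - k / 2| := le_abs_self _
    _ = √(((m : ℝ) - k / 2) ^ 2) := (Real.sqrt_sq_eq_abs _).symm
    _ ≤ _ := Real.sqrt_le_sqrt (le_add_of_nonneg_left (by positivity))

theorem u_monotone (m k : ℕ) : Monotone (u m k) := fun N N' h => by
  unfold u; gcongr

theorem u_two_mul_le (m k N : ℕ) : u m k (2 * N) ≤ 2 * u m k N := by
  have hu := u_nonneg m k N
  unfold u at *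
  set c : ℝ := (m : ℝ) - k / 2
  set S : ℝ := √(2 * k * N + c ^ 2)
  have hS2 : S ^ 2 = 2 * k * N + c ^ 2 := Real.sq_sqrt (by positivity)
  have : √(2 * k * ((2 * N : ℕ) : ℝ) + c ^ 2) ≤ 2 * S - c := by
    rw [Real.sqrt_le_left (by linarith [Real.sqrt_nonneg (2 * k * N + c ^ 2)])]
    push_cast
    nlinarith [sq_nonneg (S - c)]
  linarith

theorem hd_two_pow_mul (m k : ℕ) {n : ℕ} (hn : Odd n) (s : ℕ) :
    hd m k (2 ^ s * n) = #{ℓ ∈ n.divisors | u m k (2 ^ s * n) / 2 ^ s < ((2 * k * ℓ : ℕ) : ℝ) ∧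
      ((2 * k * ℓ : ℕ) : ℝ) ≤ 2 * u m k (2 ^ s * n)} := by
  rw [hd, Nat.card_filter_divisors_two_pow_mul hn, card_filter]
  refine sum_congr rfl fun ℓ _ => ?_
  have hcast (j : ℕ) : ((2 * k * (2 ^ j * ℓ) : ℕ) : ℝ) = 2 ^ j * ((2 * k * ℓ : ℕ) : ℝ) := by
    push_cast; ring
  simp only [hcast]
  exact card_filter_two_pow_mul_mem_Ioc (u_nonneg m k _) s

theorem stmt5_general (m k : ℕ) (n : ℕ) (hn : Odd n) (r : ℕ) :
    (hd m k (2^(r+1) * n) : ℤ) - (hd m k (2^r * n) : ℤ) =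
      ((n.divisors.filter
        (fun ℓ => u m k (2^(r+1) * n) / 2^(r+1) < ((2*k*ℓ : ℕ) : ℝ) ∧
          ((2*k*ℓ : ℕ) : ℝ) ≤ u m k (2^r * n) / 2^r)).card : ℤ)
      + ((n.divisors.filter
        (fun ℓ => 2 * u m k (2^r * n) < ((2*k*ℓ : ℕ) : ℝ) ∧
          ((2*k*ℓ : ℕ) : ℝ) ≤ 2 * u m k (2^(r+1) * n))).card : ℤ) := by
  set U := u m k (2 ^ r * n)
  set U' := u m k (2 ^ (r + 1) * n) with hU'
  have hN : 2 ^ (r + 1) * n = 2 * (2 ^ r * n) := by ring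
  have hU_nonneg : 0 ≤ U := u_nonneg m k _
  have hUU' : U ≤ U' := u_monotone m k (by omega)
  have hU'U : U' ≤ 2 * U := by rw [hU', hN]; exact u_two_mul_le m k _
  have hlo : U' / 2 ^ (r + 1) ≤ U / 2 ^ r := by
    rw [pow_succ', ← div_div]; gcongr; linarith
  have hmid : U / 2 ^ r ≤ 2 * U :=
    (div_le_self hU_nonneg (one_le_pow₀ one_le_two)).trans (by linarith)
  have hhi : 2 * U ≤ 2 * U' := by linarith
  have split_lo :=
    card_filter_mem_Ioc_add n.divisors (fun ℓ => ((2 * k * ℓ : ℕ) : ℝ)) hlo (hmid.trans hhi)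
  have split_hi :=
    card_filter_mem_Ioc_add n.divisors (fun ℓ => ((2 * k * ℓ : ℕ) : ℝ)) hmid hhi
  rw [hd_two_pow_mul m k hn, hd_two_pow_mul m k hn, ← split_lo, ← split_hi]
  push_cast; ring

theorem stmt5 (m k : ℕ) (hk : Odd k) (hk1 : 1 ≤ k) (n : ℕ) (hn : Odd n) (r : ℕ) :
    (hd m k (2^(r+1) * n) : ℤ) - (hd m k (2^r * n) : ℤ) =
      ((n.divisors.filter
        (fun ℓ => u m k (2^(r+1) * n) / 2^(r+1) < ((2*k*ℓ : ℕ) : ℝ) ∧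
          ((2*k*ℓ : ℕ) : ℝ) ≤ u m k (2^r * n) / 2^r)).card : ℤ)
      + ((n.divisors.filter
        (fun ℓ => 2 * u m k (2^r * n) < ((2*k*ℓ : ℕ) : ℝ) ∧
          ((2*k*ℓ : ℕ) : ℝ) ≤ 2 * u m k (2^(r+1) * n))).card : ℤ) :=
  stmt5_general m k n hn r
end

section
/- For every n ≥ 1, the coefficient h(n) of q^n in ∑_{j≥1} (-1)^{j+1} q^{j(j+1)/2}/(1 - q^j) equals the number of divisors d of n satisfying u(n) < 2d ≤ 2u(n), where u(n) = √(2n + 1/4) − 1/2. In particular h(n) ≥ 0. -/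
/-!
With `T j = j * (j - 1) / 2 + j = j (j + 1) / 2`, the `j`-th term of the series contributes to `q^N`
exactly when `2N = j k` with `j < k` and `j + k` odd. Exactly one of `j, k` is then an odd divisor
`c` of `N`, and the sign is `+` when `c = j` is the smaller factor, `-` when `c = k` is the larger:
`h(N)` counts the odd divisors `c` of `N` with `c² < 2N` minus those with `c² > 2N`.
Over all divisors of `N` the difference is the same, since `d ↦ 2N / d` swaps the even divisors
with `d² < 2N` and those with `d² > 2N`; and `d ↦ N / d` turns the divisors with `d² > 2N` into
those with `2d² < N`, so the difference counts the divisors with `N ≤ 2d² < 4N`.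
As `u (u + 1) = 2N`, this is the window `u < 2d ≤ 2u`.
-/

open scoped Classical

/-- `hcoef m k N` is the coefficient of `q^N` in
`∑_{n≥1} (-1)^{n-1} q^{k·n(n-1)/2 + m·n}/(1-q^n)`. -/
noncomputable def hcoef (m k N : ℕ) : ℤ :=
  ∑ n ∈ Finset.Icc 1 (2*N+2),
    (-1)^(n-1) *
      (if k*(n*(n-1)/2) + m*n ≤ N ∧ n ∣ (N - (k*(n*(n-1)/2) + m*n)) then 1 else 0)

open Finset

theorem Nat.card_divisors_filter_swap (n : ℕ) (p : ℕ → ℕ → Prop) [DecidableRel p] :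
    #{d ∈ n.divisors | p d (n / d)} = #{d ∈ n.divisors | p (n / d) d} := by
  have hinv : ∀ d ∈ n.divisors, n / (n / d) = d := fun d hd =>
    Nat.div_div_self (Nat.dvd_of_mem_divisors hd) (Nat.mem_divisors.1 hd).2
  have hmem : ∀ d ∈ n.divisors, n / d ∈ n.divisors := fun d hd =>
    Nat.mem_divisors.2
      ⟨Nat.div_dvd_of_dvd (Nat.dvd_of_mem_divisors hd), (Nat.mem_divisors.1 hd).2⟩
  refine card_bij' (fun d _ => n / d) (fun d _ => n / d) ?_ ?_
    (fun d hd => hinv d (mem_filter.1 hd).1) (fun d hd => hinv d (mem_filter.1 hd).1) <;>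
    simp only [mem_filter] <;> intro d hd <;>
    exact ⟨hmem d hd.1, by rw [hinv d hd.1]; exact hd.2⟩

theorem Nat.two_mul_triangle {j : ℕ} (hj : 0 < j) : 2 * (j * (j - 1) / 2 + j) = j * (j + 1) := by
  have h := Nat.div_two_mul_two_of_even (Nat.even_mul_pred_self j)
  obtain ⟨i, rfl⟩ := Nat.exists_eq_add_of_lt hj
  simp only [zero_add, Nat.add_sub_cancel] at h ⊢
  nlinarith

theorem triangle_le_and_dvd_sub_iff {N j : ℕ} (hj : 0 < j) :
    (j * (j - 1) / 2 + j ≤ N ∧ j ∣ N - (j * (j - 1) / 2 + j)) ↔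
      j ∣ 2 * N ∧ Odd (j + 2 * N / j) ∧ j < 2 * N / j := by
  have ht := Nat.two_mul_triangle hj
  set t := j * (j - 1) / 2 + j
  constructor
  · rintro ⟨hle, k, hk⟩
    have h2N : 2 * N = j * (j + 1 + 2 * k) := by
      have : 2 * N = 2 * t + 2 * (j * k) := by omega
      rw [this, ht]; ring
    rw [h2N, Nat.mul_div_cancel_left _ hj]
    exact ⟨dvd_mul_right _ _, by rw [Nat.odd_iff]; omega, by omega⟩
  · rintro ⟨⟨q, hq⟩, hodd, hlt⟩
    rw [hq, Nat.mul_div_cancel_left _ hj] at hodd hlt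
    obtain ⟨k, hk⟩ : ∃ k, q = j + 1 + 2 * k :=
      ⟨(q - j - 1) / 2, by rw [Nat.odd_iff] at hodd; omega⟩
    have h2N : 2 * N = 2 * t + 2 * (j * k) := by rw [hq, hk, ht]; ring
    exact ⟨by omega, k, by omega⟩

theorem hcoef_one_one_eq_sum (N : ℕ) :
    hcoef 1 1 N =
      ∑ j ∈ (2 * N).divisors with Odd (j + 2 * N / j) ∧ j < 2 * N / j, (-1) ^ (j - 1) := by
  simp only [hcoef, one_mul, mul_ite, mul_one, mul_zero, ← sum_filter]
  refine sum_congr (ext fun j => ?_) fun _ _ => rfl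
  simp only [mem_filter, mem_Icc, Nat.mem_divisors]
  constructor
  · rintro ⟨⟨hj, -⟩, h⟩
    obtain ⟨hdvd, hodd, hlt⟩ := (triangle_le_and_dvd_sub_iff hj).1 h
    exact ⟨⟨hdvd, by omega⟩, hodd, hlt⟩
  · rintro ⟨⟨hdvd, hN⟩, h⟩
    have hj : 0 < j := Nat.pos_of_dvd_of_pos hdvd (by omega)
    exact ⟨⟨hj, (Nat.le_of_dvd (by omega) hdvd).trans (by omega)⟩,
      (triangle_le_and_dvd_sub_iff hj).2 ⟨hdvd, h⟩⟩

theorem sum_neg_one_pow_pred (s : Finset ℕ) (hs : ∀ j ∈ s, 0 < j) :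
    ∑ j ∈ s, (-1 : ℤ) ^ (j - 1) = #{j ∈ s | Odd j} - #{j ∈ s | ¬Odd j} := by
  have key : ∀ j ∈ s, (-1 : ℤ) ^ (j - 1) = if Odd j then 1 else -1 := by
    intro j hj
    obtain ⟨i, rfl⟩ := Nat.exists_eq_add_of_lt (hs j hj)
    rcases Nat.even_or_odd i with hi | hi
    · simp [hi.neg_one_pow, hi.add_one]
    · simp [hi.neg_one_pow, Nat.not_odd_iff_even.2 hi.add_one]
  rw [sum_congr rfl key, sum_ite, sum_const, sum_const]
  simp [sub_eq_add_neg]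

theorem Nat.odd_add_iff_of_mul_eq_two_mul {d e N : ℕ} (h : d * e = 2 * N) :
    Odd (d + e) ↔ Odd d ∨ Odd e := by
  have : ¬(Odd d ∧ Odd e) := by
    rw [← Nat.odd_mul, h]; simp
  rw [Nat.odd_add, ← Nat.not_odd_iff_even]; tauto

theorem Nat.mem_divisors_two_mul_of_odd {d N : ℕ} (hd : Odd d) :
    d ∈ (2 * N).divisors ↔ d ∈ N.divisors := by
  simp only [Nat.mem_divisors, hd.coprime_two_right.dvd_mul_left]
  omega

theorem hcoef_one_one_eq_card_sub (N : ℕ) :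
    hcoef 1 1 N =
      #{d ∈ N.divisors | Odd d ∧ d * d < 2 * N} -
        #{d ∈ N.divisors | Odd d ∧ 2 * N < d * d} := by
  rw [hcoef_one_one_eq_sum,
    sum_neg_one_pow_pred _ fun j hj => Nat.pos_of_mem_divisors (mem_filter.1 hj).1,
    filter_filter, filter_filter]
  rw [Nat.card_divisors_filter_swap (2 * N) fun a b => (Odd (a + b) ∧ a < b) ∧ ¬Odd a]
  congr 2 <;> refine congrArg card (ext fun d => ?_) <;> simp only [mem_filter]
  · constructor
    · rintro ⟨hd2N, ⟨-, hlt⟩, hd⟩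
      rw [Nat.lt_div_iff_mul_lt_of_dvd hd.pos.ne' (Nat.dvd_of_mem_divisors hd2N)] at hlt
      exact ⟨(Nat.mem_divisors_two_mul_of_odd hd).1 hd2N, hd, hlt⟩
    · rintro ⟨hdN, hd, hlt⟩
      have hd2N := (Nat.mem_divisors_two_mul_of_odd hd).2 hdN
      have hde := Nat.mul_div_cancel' (Nat.dvd_of_mem_divisors hd2N)
      exact ⟨hd2N, ⟨(Nat.odd_add_iff_of_mul_eq_two_mul hde).2 (Or.inl hd),
        (Nat.lt_div_iff_mul_lt_of_dvd hd.pos.ne' (Nat.dvd_of_mem_divisors hd2N)).2 hlt⟩, hd⟩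
  · constructor
    · rintro ⟨hd2N, ⟨hodd, hlt⟩, he⟩
      have hed := Nat.div_mul_cancel (Nat.dvd_of_mem_divisors hd2N)
      have hd : Odd d := ((Nat.odd_add_iff_of_mul_eq_two_mul hed).1 hodd).resolve_left he
      rw [Nat.div_lt_iff_lt_mul hd.pos] at hlt
      exact ⟨(Nat.mem_divisors_two_mul_of_odd hd).1 hd2N, hd, hlt⟩
    · rintro ⟨hdN, hd, hlt⟩
      have hd2N := (Nat.mem_divisors_two_mul_of_odd hd).2 hdN
      have hed := Nat.div_mul_cancel (Nat.dvd_of_mem_divisors hd2N)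
      have he : ¬Odd (2 * N / d) := fun he =>
        Nat.not_odd_iff_even.2 (even_two_mul N) (hed ▸ Nat.odd_mul.2 ⟨he, hd⟩)
      exact ⟨hd2N, ⟨(Nat.odd_add_iff_of_mul_eq_two_mul hed).2 (Or.inr hd),
        (Nat.div_lt_iff_lt_mul hd.pos).2 hlt⟩, he⟩

theorem Nat.card_filter_eq_odd_add_even (s : Finset ℕ) (p : ℕ → Prop) [DecidablePred p] :
    #{d ∈ s | p d} = #{d ∈ s | Odd d ∧ p d} + #{d ∈ s | Even d ∧ p d} := by
  rw [← card_filter_add_card_filter_not (s := {d ∈ s | p d}) Odd, filter_filter, filter_filter]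
  simp only [and_comm, Nat.not_odd_iff_even]

theorem Nat.two_mul_div_of_even_mem_divisors {N d : ℕ} (hd : d ∈ N.divisors) (hev : Even d) :
    2 * N / d ∈ N.divisors ∧ Even (2 * N / d) ∧ 2 * N / (2 * N / d) = d ∧
      (d * d < 2 * N ↔ 2 * N < 2 * N / d * (2 * N / d)) := by
  obtain ⟨⟨b, rfl⟩, hN⟩ := Nat.mem_divisors.1 hd
  obtain ⟨a, rfl⟩ := hev
  have ha : 0 < a := by rcases Nat.eq_zero_or_pos a with rfl | h <;> simp_all
  have hb : 0 < b := by rcases Nat.eq_zero_or_pos b with rfl | h <;> simp_all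
  have h2N : 2 * ((a + a) * b) = (a + a) * (2 * b) := by ring
  have h2N' : 2 * ((a + a) * b) = (2 * b) * (a + a) := by ring
  rw [h2N, Nat.mul_div_cancel_left _ (by omega), ← h2N, h2N',
    Nat.mul_div_cancel_left _ (by omega)]
  refine ⟨Nat.mem_divisors.2 ⟨⟨a, by ring⟩, hN⟩, even_two_mul b, rfl, ?_⟩
  constructor <;> intro h <;> nlinarith

theorem card_even_divisors_mul_self_lt_eq (N : ℕ) :
    #{d ∈ N.divisors | Even d ∧ d * d < 2 * N} =
      #{d ∈ N.divisors | Even d ∧ 2 * N < d * d} := by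
  refine card_bij' (fun d _ => 2 * N / d) (fun d _ => 2 * N / d) ?_ ?_ ?_ ?_ <;>
    simp only [mem_filter] <;> rintro d ⟨hd, hev, hlt⟩
  · obtain ⟨hd', hev', -, hiff⟩ := Nat.two_mul_div_of_even_mem_divisors hd hev
    exact ⟨hd', hev', hiff.1 hlt⟩
  · obtain ⟨hd', hev', hinv, -⟩ := Nat.two_mul_div_of_even_mem_divisors hd hev
    obtain ⟨-, -, -, hiff⟩ := Nat.two_mul_div_of_even_mem_divisors hd' hev'
    exact ⟨hd', hev', hiff.2 (by rwa [hinv])⟩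
  all_goals exact (Nat.two_mul_div_of_even_mem_divisors hd hev).2.2.1

theorem card_divisors_filter_mul_self_lt_two_mul (N : ℕ) :
    #{d ∈ N.divisors | d * d < 2 * N} =
      #{d ∈ N.divisors | N ≤ 2 * (d * d) ∧ d * d < 2 * N} +
        #{d ∈ N.divisors | 2 * N < d * d} := by
  have hsmall : #{d ∈ N.divisors | 2 * d < N / d} =
      #{d ∈ N.divisors | d * d < 2 * N ∧ ¬N ≤ 2 * (d * d)} := by
    refine congrArg card (filter_congr fun d hd => ?_)
    rw [Nat.lt_div_iff_mul_lt_of_dvd (Nat.pos_of_mem_divisors hd).ne' (Nat.dvd_of_mem_divisors hd),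
      mul_assoc]
    omega
  have hlarge : #{d ∈ N.divisors | 2 * (N / d) < d} = #{d ∈ N.divisors | 2 * N < d * d} := by
    refine congrArg card (filter_congr fun d hd => ?_)
    rw [← Nat.mul_div_assoc 2 (Nat.dvd_of_mem_divisors hd),
      Nat.div_lt_iff_lt_mul (Nat.pos_of_mem_divisors hd)]
  rw [← hlarge, ← Nat.card_divisors_filter_swap N fun a b => 2 * a < b, hsmall,
    ← card_filter_add_card_filter_not (s := {d ∈ N.divisors | d * d < 2 * N})
      fun d => N ≤ 2 * (d * d),
    filter_filter, filter_filter]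
  simp only [and_comm]

theorem card_divisors_window_eq_odd_sub (N : ℕ) :
    (#{d ∈ N.divisors | N ≤ 2 * (d * d) ∧ d * d < 2 * N} : ℤ) =
      #{d ∈ N.divisors | Odd d ∧ d * d < 2 * N} -
        #{d ∈ N.divisors | Odd d ∧ 2 * N < d * d} := by
  have h := card_divisors_filter_mul_self_lt_two_mul N
  rw [Nat.card_filter_eq_odd_add_even, Nat.card_filter_eq_odd_add_even _ (fun d => 2 * N < d * d),
    card_even_divisors_mul_self_lt_eq] at h
  omega

theorem u_one_one_lt_iff {N : ℕ} {t : ℝ} (ht : 0 ≤ t) :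
    u 1 1 N < t ↔ 2 * N < t * (t + 1) := by
  rw [u, sub_lt_iff_lt_add, Real.sqrt_lt' (by norm_num; linarith)]
  constructor <;> intro h <;> nlinarith

theorem le_u_one_one_iff {N : ℕ} {t : ℝ} (ht : 0 ≤ t) :
    t ≤ u 1 1 N ↔ t * (t + 1) ≤ 2 * N := by
  rw [u, le_sub_iff_add_le, Real.le_sqrt (by norm_num; linarith) (by positivity)]
  constructor <;> intro h <;> nlinarith

theorem u_one_one_window_iff {N d : ℕ} (hd : d ∈ N.divisors) :
    (u 1 1 N < ((2 * d : ℕ) : ℝ) ∧ ((2 * d : ℕ) : ℝ) ≤ 2 * u 1 1 N) ↔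
      N ≤ 2 * (d * d) ∧ d * d < 2 * N := by
  have hd0 : 0 < d := Nat.pos_of_mem_divisors hd
  obtain ⟨e, rfl⟩ := Nat.dvd_of_mem_divisors hd
  have hlow : u 1 1 (d * e) < ((2 * d : ℕ) : ℝ) ↔ d * e ≤ 2 * (d * d) := by
    have key : d * e ≤ 2 * (d * d) ↔ 2 * (d * e) < 2 * d * (2 * d + 1) := by
      rw [show 2 * (d * d) = d * (2 * d) by ring, show 2 * (d * e) = d * (2 * e) by ring,
        show 2 * d * (2 * d + 1) = d * (4 * d + 2) by ring, Nat.mul_le_mul_left_iff hd0,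
        Nat.mul_lt_mul_left hd0]
      omega
    rw [u_one_one_lt_iff (by positivity), key]
    norm_cast
  have hhigh : ((2 * d : ℕ) : ℝ) ≤ 2 * u 1 1 (d * e) ↔ d * d < 2 * (d * e) := by
    have key : d * d < 2 * (d * e) ↔ d * (d + 1) ≤ 2 * (d * e) := by
      rw [show 2 * (d * e) = d * (2 * e) by ring, Nat.mul_le_mul_left_iff hd0,
        Nat.mul_lt_mul_left hd0]
      omega
    rw [Nat.cast_mul, Nat.cast_two, mul_le_mul_iff_right₀ two_pos,
      le_u_one_one_iff (by positivity), key]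
    norm_cast
  rw [hlow, hhigh]

theorem stmt13_general (n : ℕ) :
    hcoef 1 1 n =
      ((n.divisors.filter
        (fun d => u 1 1 n < ((2*d : ℕ) : ℝ) ∧ ((2*d : ℕ) : ℝ) ≤ 2 * u 1 1 n)).card : ℤ)
      ∧ 0 ≤ hcoef 1 1 n := by
  have h : hcoef 1 1 n = #{d ∈ n.divisors | n ≤ 2 * (d * d) ∧ d * d < 2 * n} := by
    rw [hcoef_one_one_eq_card_sub, card_divisors_window_eq_odd_sub]
  rw [filter_congr fun d hd => u_one_one_window_iff hd]
  exact ⟨h, h ▸ Int.natCast_nonneg _⟩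

theorem stmt13 (n : ℕ) (hn : 1 ≤ n) :
    hcoef 1 1 n =
      ((n.divisors.filter
        (fun d => u 1 1 n < ((2*d : ℕ) : ℝ) ∧ ((2*d : ℕ) : ℝ) ≤ 2 * u 1 1 n)).card : ℤ)
      ∧ 0 ≤ hcoef 1 1 n :=
  stmt13_general n
end

section
/- There exists a constant c > 0 such that for all x ≥ 2, the number of integers 0 ≤ n ≤ x with h_{m,k}(n) = 0 is at least c·x/log x, for any fixed integer m ≥ 0 and odd integer k ≥ 1. -/
open scoped Classical

/-!
Since `u(n)` is the positive root `y` of `y (y + 2m - k) = 2kn`, every prime `p ≥ max (k + 2m) 4`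
has `h_{m,k}(p) = 0`: its only divisors are `1` and `p`, and `2k ≤ u(p) < kp`.
Hence the count is at least `π(x) - O(1)`, and Chebyshev's bound `π(x) ≫ x / log x` finishes.
-/

open Real Filter

lemma le_u_iff {m k n : ℕ} {y : ℝ} (hy : 0 ≤ y + ((m : ℝ) - k / 2)) :
    y ≤ u m k n ↔ y * (y + 2 * m - k) ≤ 2 * k * n := by
  rw [u, le_sub_iff_add_le, Real.le_sqrt hy (by positivity)]
  constructor <;> intro h <;> nlinarith

lemma hd_eq_zero_of_prime {m k p : ℕ} (hk : 0 < k) (hp : p.Prime) (hkmp : k + 2 * m ≤ p)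
    (hp4 : 4 ≤ p) : hd m k p = 0 := by
  have hkR : (1 : ℝ) ≤ k := by exact_mod_cast hk
  have hkmpR : (k : ℝ) + 2 * m ≤ p := by exact_mod_cast hkmp
  have hp4R : (4 : ℝ) ≤ p := by exact_mod_cast hp4
  have hmR : (0 : ℝ) ≤ m := m.cast_nonneg
  have two_k_le_u : 2 * k ≤ u m k p :=
    (le_u_iff (by linarith)).2 (by nlinarith)
  have u_lt_k_p : u m k p < k * p := by
    have hkp : (0 : ℝ) < k * p := by positivity
    have hgt : (2 : ℝ) < k * p + 2 * m - k := by nlinarith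
    rw [← not_le, le_u_iff (by nlinarith)]
    nlinarith [mul_lt_mul_of_pos_left hgt hkp]
  rw [hd, Finset.card_eq_zero, Finset.filter_eq_empty_iff]
  intro d hdiv
  rcases hp.eq_one_or_self_of_dvd d (Nat.dvd_of_mem_divisors hdiv) with rfl | rfl
  · push_cast
    exact fun h => by linarith [h.1]
  · push_cast
    exact fun h => by linarith [h.2]

lemma primeCounting_le_card_hd_eq_zero_add {m k : ℕ} (hk : 0 < k) (N : ℕ) :
    N.primeCounting ≤
      ((Finset.range (N + 1)).filter (fun n => hd m k n = 0)).card + (k + 2 * m + 4) := by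
  have hsub : N.primesLE ⊆
      (Finset.range (N + 1)).filter (fun n => hd m k n = 0) ∪ Finset.range (k + 2 * m + 4) := by
    intro p hp
    obtain ⟨hpN, hp⟩ := Nat.mem_primesLE.1 hp
    by_cases hpB : k + 2 * m + 4 ≤ p
    · exact Finset.mem_union_left _ <| Finset.mem_filter.2
        ⟨Finset.mem_range.2 (by omega), hd_eq_zero_of_prime hk hp (by omega) (by omega)⟩
    · exact Finset.mem_union_right _ (Finset.mem_range.2 (by omega))
  rw [← Nat.primesLE_card_eq_primeCounting]
  calc _ ≤ _ := Finset.card_le_card hsub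
    _ ≤ _ := Finset.card_union_le _ _
    _ = _ := by rw [Finset.card_range]

lemma eventually_mul_le_primeCounting_sub_mul_log (B : ℝ) :
    ∀ᶠ x : ℝ in atTop, log 2 / 2 * x ≤ ((⌊x⌋₊.primeCounting : ℝ) - B) * log x := by
  have hlog2 : 0 < log 2 := log_pos one_lt_two
  filter_upwards [(isLittleO_log_id_atTop.const_mul_left (B + 1)).bound (by positivity :
      0 < log 2 / 4), eventually_ge_atTop 8] with x hlog hx
  have hlogx : 0 < log x := log_pos (by linarith)
  have hπ := (div_le_iff₀ hlogx).1 (Chebyshev.pi_ge' (by linarith))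
  have hlog_add : log (x + 2) ≤ log 2 + log x := by
    rw [← log_mul two_ne_zero (by linarith)]
    exact log_le_log (by linarith) (by linarith)
  rw [Real.norm_eq_abs, Real.norm_eq_abs, id, abs_of_pos (by linarith : 0 < x)] at hlog
  have h8 : 8 * log 2 ≤ x * log 2 := by nlinarith
  linarith [le_abs_self ((B + 1) * log x)]

lemma exists_pos_mul_div_log_le {f : ℝ → ℝ} {a : ℝ} (ha : 0 < a)
    (hf : ∀ x, 2 ≤ x → 1 ≤ f x) (hlarge : ∀ᶠ x in atTop, a * x ≤ f x * log x) :
    ∃ c : ℝ, 0 < c ∧ ∀ x : ℝ, 2 ≤ x → c * x / log x ≤ f x := by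
  obtain ⟨X, hX⟩ := eventually_atTop.1 hlarge
  have hlog2 : 0 < log 2 := log_pos one_lt_two
  have hX2 : 0 < max X 2 := by positivity
  refine ⟨min a (log 2 / max X 2), lt_min ha (by positivity), fun x hx => ?_⟩
  rw [div_le_iff₀ (log_pos (by linarith))]
  rcases le_total (max X 2) x with hXx | hxX
  · calc min a (log 2 / max X 2) * x ≤ a * x := by gcongr; exact min_le_left _ _
      _ ≤ f x * log x := hX x (le_of_max_le_left hXx)
  · calc min a (log 2 / max X 2) * x ≤ log 2 / max X 2 * max X 2 := by
          gcongr
          · exact min_le_right _ _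
      _ = log 2 := div_mul_cancel₀ _ hX2.ne'
      _ ≤ 1 * log x := by rw [one_mul]; exact log_le_log two_pos hx
      _ ≤ f x * log x := mul_le_mul_of_nonneg_right (hf x hx) (log_nonneg (by linarith))

theorem stmt14_general (m k : ℕ) (hk1 : 1 ≤ k) :
    ∃ c : ℝ, 0 < c ∧ ∀ x : ℝ, 2 ≤ x →
      c * x / Real.log x ≤
        (((Finset.range (⌊x⌋₊ + 1)).filter (fun n => hd m k n = 0)).card : ℝ) := by
  refine exists_pos_mul_div_log_le (a := log 2 / 2) (by positivity) (fun x _ => ?_) ?_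
  · have h0 : 0 ∈ (Finset.range (⌊x⌋₊ + 1)).filter (fun n => hd m k n = 0) := by simp [hd]
    exact_mod_cast Finset.card_pos.2 ⟨0, h0⟩
  · filter_upwards [eventually_mul_le_primeCounting_sub_mul_log (k + 2 * m + 4),
      eventually_ge_atTop 1] with x hx hx1
    have hcount : (⌊x⌋₊.primeCounting : ℝ) - (k + 2 * m + 4) ≤
        ((Finset.range (⌊x⌋₊ + 1)).filter (fun n => hd m k n = 0)).card := by
      have := primeCounting_le_card_hd_eq_zero_add (m := m) hk1 ⌊x⌋₊
      rw [sub_le_iff_le_add]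
      exact_mod_cast this
    exact hx.trans (mul_le_mul_of_nonneg_right hcount (log_nonneg hx1))

theorem stmt14 (m k : ℕ) (hk : Odd k) (hk1 : 1 ≤ k) :
    ∃ c : ℝ, 0 < c ∧ ∀ x : ℝ, 2 ≤ x →
      c * x / Real.log x ≤
        (((Finset.range (⌊x⌋₊ + 1)).filter (fun n => hd m k n = 0)).card : ℝ) :=
  stmt14_general m k hk1
end
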